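/- Let φ : ℕ → ℝ with φ(0) = 0 and φ(x) > 0 for x ≥ 1, let μ be a probability measure on (0,∞) with finite second moment such that Z_s < ∞ for μ-almost every s, set λ = ∫ s dμ(s) and assume Z_λ < ∞, and define the mixture m(x) = ∫ I_φ(s)(x) dμ(s). Let u : ℕ → (0,∞). Let f : ℕ → ℝ be integrable with respect to I_φ(λ) and with respect to m, and let g be a solution of the Stein equation for f with respect to I_φ(λ) with M := sup_{x ∈ ℕ} |g(x+1) − g(x)|/u(x) < ∞ and Σ_x |g(x+1)| I_φ(s)(x) < ∞ for μ-almost every s. Let K ≥ 0 be such that, for every h : ℕ → ℝ satisfying |h(x+1) − h(x)| ≤ u(x+1) for all x ∈ ℕ and integrable with respect to I_φ(λ) and with respect to I_φ(s) for μ-almost every s, every solution g_h of the Stein equation for h with respect to I_φ(λ) with g_h(0) = 0 satisfies sup_x |g_h(x)| ≤ K. Then |Σ_x f(x) m(x) − Σ_x f(x) I_φ(λ)(x)| ≤ M · K · ∫ (s − λ)² dμ(s). -/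

import Mathlib

open MeasureTheory
open scoped BigOperators

/-- The product `φ(1)⋯φ(x)` (empty product equal to `1`). -/
noncomputable def phiProd (φ : ℕ → ℝ) (x : ℕ) : ℝ := ∏ i ∈ Finset.range x, φ (i + 1)

/-- Normalizing constant `Z_λ = Σ_{x≥0} λ^x / (φ(1)⋯φ(x))`. -/
noncomputable def Zphi (φ : ℕ → ℝ) (lam : ℝ) : ℝ := ∑' x : ℕ, lam ^ x / phiProd φ x

/-- The probability measure `I_φ(λ)(x) = Z_λ⁻¹ λ^x / (φ(1)⋯φ(x))`. -/
noncomputable def Iphi (φ : ℕ → ℝ) (lam : ℝ) (x : ℕ) : ℝ :=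
  (lam ^ x / phiProd φ x) / Zphi φ lam

/-!
Integrating the Stein identity `E_s f - E_λ f = (λ - s) E_s[g(· + 1)]` of `I_φ(s)` against `μ`
gives `Σ f m - E_λ f = ∫ (λ - s) G(s) dμ` with `G(s) = E_s[g(· + 1)]`. As `∫ (λ - s) dμ = 0`, `G`
may be shifted by any constant `c`. The test function `h = g(· + 1) / M` is admissible for `K`,
so the Stein identity of `I_φ(s)` for its solutions `g_h` gives `|E_s h - c| ≤ K |λ - s|` for a
suitable constant `c` (morally `E_λ h`). Hence `|G(s) - M c| ≤ M K |λ - s|`, and integrating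
`(λ - s) (G(s) - M c)` gives the bound.
-/

open Filter Topology

section Iphi

variable {φ : ℕ → ℝ} {s : ℝ}

lemma phiProd_pos (hφ : ∀ x : ℕ, 1 ≤ x → 0 < φ x) (x : ℕ) : 0 < phiProd φ x :=
  Finset.prod_pos fun i _ => hφ (i + 1) (Nat.le_add_left 1 i)

lemma Iphi_nonneg (hφ : ∀ x : ℕ, 1 ≤ x → 0 < φ x) (hs : 0 ≤ s) (x : ℕ) : 0 ≤ Iphi φ s x := by
  have hterm : ∀ y, 0 ≤ s ^ y / phiProd φ y := fun y =>
    div_nonneg (pow_nonneg hs y) (phiProd_pos hφ y).le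
  exact div_nonneg (hterm x) (tsum_nonneg hterm)

lemma one_le_Zphi (hφ : ∀ x : ℕ, 1 ≤ x → 0 < φ x) (hs : 0 ≤ s)
    (hZ : Summable fun x : ℕ => s ^ x / phiProd φ x) : 1 ≤ Zphi φ s := by
  unfold Zphi
  simpa [phiProd] using
    hZ.le_tsum 0 fun y _ => div_nonneg (pow_nonneg hs y) (phiProd_pos hφ y).le

lemma hasSum_Iphi (hφ : ∀ x : ℕ, 1 ≤ x → 0 < φ x) (hs : 0 ≤ s)
    (hZ : Summable fun x : ℕ => s ^ x / phiProd φ x) : HasSum (Iphi φ s) 1 := by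
  have hZ0 : Zphi φ s ≠ 0 := (zero_lt_one.trans_le (one_le_Zphi hφ hs hZ)).ne'
  have h := hZ.hasSum.div_const (Zphi φ s)
  rwa [← Zphi, div_self hZ0] at h

lemma Iphi_le_one (hφ : ∀ x : ℕ, 1 ≤ x → 0 < φ x) (hs : 0 ≤ s)
    (hZ : Summable fun x : ℕ => s ^ x / phiProd φ x) (x : ℕ) : Iphi φ s x ≤ 1 :=
  le_hasSum (hasSum_Iphi hφ hs hZ) x fun y _ => Iphi_nonneg hφ hs y

lemma phi_succ_mul_Iphi_succ (hφ : ∀ x : ℕ, 1 ≤ x → 0 < φ x) (x : ℕ) :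
    φ (x + 1) * Iphi φ s (x + 1) = s * Iphi φ s x := by
  have hφx : φ (x + 1) ≠ 0 := (hφ (x + 1) (Nat.le_add_left 1 x)).ne'
  have hP : phiProd φ x ≠ 0 := (phiProd_pos hφ x).ne'
  rw [Iphi, Iphi, phiProd, Finset.prod_range_succ, ← phiProd]
  field_simp
  ring

@[fun_prop]
lemma stronglyMeasurable_Iphi (x : ℕ) : StronglyMeasurable fun s => Iphi φ s x := by
  unfold Iphi Zphi
  fun_prop

lemma integrable_Iphi (hφ : ∀ x : ℕ, 1 ≤ x → 0 < φ x) {μ : Measure ℝ} [IsFiniteMeasure μ]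
    (hμ : ∀ᵐ s ∂μ, 0 ≤ s) (hZ : ∀ᵐ s ∂μ, Summable fun x : ℕ => s ^ x / phiProd φ x) (x : ℕ) :
    Integrable (fun s => Iphi φ s x) μ := by
  refine .of_bound (stronglyMeasurable_Iphi x).aestronglyMeasurable 1 ?_
  filter_upwards [hμ, hZ] with s hs hZs
  rw [Real.norm_of_nonneg (Iphi_nonneg hφ hs x)]
  exact Iphi_le_one hφ hs hZs x

end Iphi

section SteinIdentity

variable {φ : ℕ → ℝ} {s : ℝ}

lemma hasSum_phi_mul_Iphi (hφ0 : φ 0 = 0) (hφ : ∀ x : ℕ, 1 ≤ x → 0 < φ x) {w : ℕ → ℝ}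
    (hw : Summable fun x => w (x + 1) * Iphi φ s x) :
    HasSum (fun x => φ x * w x * Iphi φ s x) (s * ∑' x, w (x + 1) * Iphi φ s x) := by
  have hshift : HasSum (fun x => φ (x + 1) * w (x + 1) * Iphi φ s (x + 1))
      (s * ∑' x, w (x + 1) * Iphi φ s x) :=
    (hw.hasSum.mul_left s).congr_fun fun x => by
      rw [mul_right_comm, phi_succ_mul_Iphi_succ hφ]
      ring
  simpa [hφ0] using (hasSum_nat_add_iff (f := fun x => φ x * w x * Iphi φ s x) 1).1 hshift

lemma Iphi_stein_identity (hφ0 : φ 0 = 0) (hφ : ∀ x : ℕ, 1 ≤ x → 0 < φ x) (hs : 0 ≤ s)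
    (hZ : Summable fun x : ℕ => s ^ x / phiProd φ x) {lam E : ℝ} {h w : ℕ → ℝ}
    (hw_eq : ∀ x, lam * w (x + 1) - φ x * w x = h x - E)
    (hw : Summable fun x => w (x + 1) * Iphi φ s x) :
    ∑' x, h x * Iphi φ s x - E = (lam - s) * ∑' x, w (x + 1) * Iphi φ s x := by
  have hsum := ((hw.hasSum.mul_left lam).sub (hasSum_phi_mul_Iphi hφ0 hφ hw)).add
    ((hasSum_Iphi hφ hs hZ).mul_left E)
  rw [(hsum.congr_fun fun x => ?_).tsum_eq]
  · ring
  · rw [show h x = lam * w (x + 1) - φ x * w x + E by linarith [hw_eq x]]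
    ring

lemma abs_tsum_mul_Iphi_sub_le (hφ0 : φ 0 = 0) (hφ : ∀ x : ℕ, 1 ≤ x → 0 < φ x) (hs : 0 ≤ s)
    (hZ : Summable fun x : ℕ => s ^ x / phiProd φ x) {lam E K : ℝ} {h w : ℕ → ℝ}
    (hw_eq : ∀ x, lam * w (x + 1) - φ x * w x = h x - E) (hwK : ∀ x, |w x| ≤ K) :
    |∑' x, h x * Iphi φ s x - E| ≤ K * |lam - s| := by
  have hdom : ∀ x, ‖w (x + 1) * Iphi φ s x‖ ≤ K * Iphi φ s x := fun x => by
    rw [norm_mul, Real.norm_eq_abs, Real.norm_of_nonneg (Iphi_nonneg hφ hs x)]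
    exact mul_le_mul_of_nonneg_right (hwK _) (Iphi_nonneg hφ hs x)
  have hK := (hasSum_Iphi hφ hs hZ).mul_left K
  have hwI : |∑' x, w (x + 1) * Iphi φ s x| ≤ K := by
    simpa using tsum_of_norm_bounded hK hdom
  rw [Iphi_stein_identity hφ0 hφ hs hZ hw_eq (.of_norm_bounded hK.summable hdom), abs_mul,
    mul_comm K]
  exact mul_le_mul_of_nonneg_left hwI (abs_nonneg _)

end SteinIdentity

noncomputable def steinSolution (φ : ℕ → ℝ) (lam : ℝ) (h : ℕ → ℝ) (E : ℝ) : ℕ → ℝ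
  | 0 => 0
  | x + 1 => (φ x * steinSolution φ lam h E x + h x - E) / lam

lemma steinSolution_spec {φ : ℕ → ℝ} {lam : ℝ} (hlam : lam ≠ 0) (h : ℕ → ℝ) (E : ℝ) (x : ℕ) :
    lam * steinSolution φ lam h E (x + 1) - φ x * steinSolution φ lam h E x = h x - E := by
  rw [steinSolution, mul_div_cancel₀ _ hlam]
  ring

noncomputable def truncate (n : ℕ) (a : ℝ) : ℝ :=
  Set.projIcc (-n : ℝ) n (neg_le_self n.cast_nonneg) a

lemma truncate_of_abs_le {n : ℕ} {a : ℝ} (ha : |a| ≤ n) : truncate n a = a :=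
  congrArg Subtype.val (Set.projIcc_of_mem _ (abs_le.1 ha))

lemma abs_truncate_sub_truncate (n : ℕ) (a b : ℝ) : |truncate n a - truncate n b| ≤ |a - b| :=
  Set.abs_projIcc_sub_projIcc _

lemma abs_truncate_le (n : ℕ) (a : ℝ) : |truncate n a| ≤ n :=
  abs_le.2 (Set.projIcc _ _ _ a).2

lemma abs_truncate_le_abs (n : ℕ) (a : ℝ) : |truncate n a| ≤ |a| := by
  simpa [truncate_of_abs_le (n := n) (a := 0) (by simp)] using abs_truncate_sub_truncate n a 0

lemma tendsto_truncate (a : ℝ) : Tendsto (fun n => truncate n a) atTop (𝓝 a) :=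
  tendsto_const_nhds.congr' <| (eventually_ge_atTop ⌈|a|⌉₊).mono fun _ hn =>
    (truncate_of_abs_le (Nat.ceil_le.1 hn)).symm

lemma exists_abs_sub_le_of_tendsto {α : Type*} {l : Filter α} [l.NeBot] {F : ℕ → α → ℝ}
    {F' B : α → ℝ} {e : ℕ → ℝ} (hF : ∀ᶠ a in l, Tendsto (fun n => F n a) atTop (𝓝 (F' a)))
    (hB : ∀ᶠ a in l, ∀ n, |F n a - e n| ≤ B a) :
    ∃ c, ∀ᶠ a in l, |F' a - c| ≤ B a := by
  obtain ⟨a₀, hF₀, hB₀⟩ := (hF.and hB).exists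
  obtain ⟨C, hC⟩ := isBounded_iff_forall_norm_le.1 (Metric.isBounded_range_of_tendsto _ hF₀)
  have he : Bornology.IsBounded (Set.range e) := by
    refine isBounded_iff_forall_norm_le.2 ⟨C + B a₀, ?_⟩
    rintro _ ⟨n, rfl⟩
    have hFn : |F n a₀| ≤ C := hC _ (Set.mem_range_self n)
    have := abs_sub_abs_le_abs_sub (e n) (F n a₀)
    rw [abs_sub_comm] at this
    rw [Real.norm_eq_abs]
    linarith [hB₀ n]
  obtain ⟨c, -, σ, hσ, hc⟩ := tendsto_subseq_of_bounded he (Set.mem_range_self (f := e))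
  refine ⟨c, (hF.and hB).mono fun a ⟨hFa, hBa⟩ => ?_⟩
  exact le_of_tendsto ((hFa.comp hσ.tendsto_atTop).sub hc).abs
    (Eventually.of_forall fun k => hBa (σ k))

def IsSteinBound (φ : ℕ → ℝ) (μ : Measure ℝ) (lam : ℝ) (u : ℕ → ℝ) (K : ℝ) : Prop :=
  ∀ h : ℕ → ℝ, (∀ x : ℕ, |h (x + 1) - h x| ≤ u (x + 1)) →
    (Summable fun x : ℕ => |h x| * Iphi φ lam x) →
    (∀ᵐ s ∂μ, Summable fun x : ℕ => |h x| * Iphi φ s x) →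
    ∀ gh : ℕ → ℝ,
      (∀ x : ℕ, lam * gh (x + 1) - φ x * gh x = h x - ∑' y : ℕ, h y * Iphi φ lam y) →
      gh 0 = 0 → ∀ x : ℕ, |gh x| ≤ K

section SteinBound

variable {φ : ℕ → ℝ} {μ : Measure ℝ} [NeZero μ] {lam K : ℝ} {u h : ℕ → ℝ}

/-- `h` itself need not be `Iphi φ lam`-integrable, so the Stein bound is applied to the
truncations of `h`, and the limit is taken along a subsequence on which their centring constants
`∑' y, truncate n (h y) * Iphi φ lam y` converge. -/
lemma IsSteinBound.exists_abs_tsum_mul_Iphi_sub_le (hK : IsSteinBound φ μ lam u K)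
    (hφ0 : φ 0 = 0) (hφ : ∀ x : ℕ, 1 ≤ x → 0 < φ x) (hμ : ∀ᵐ s ∂μ, 0 ≤ s)
    (hZae : ∀ᵐ s ∂μ, Summable fun x : ℕ => s ^ x / phiProd φ x) (hlam : 0 < lam)
    (hZ : Summable fun x : ℕ => lam ^ x / phiProd φ x)
    (hLip : ∀ x, |h (x + 1) - h x| ≤ u (x + 1))
    (hh : ∀ᵐ s ∂μ, Summable fun x => |h x| * Iphi φ s x) :
    ∃ c, ∀ᵐ s ∂μ, |∑' x, h x * Iphi φ s x - c| ≤ K * |lam - s| := by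
  have htrunc_summable : ∀ {t : ℝ}, 0 ≤ t → (Summable fun x : ℕ => t ^ x / phiProd φ x) →
      ∀ n : ℕ, Summable fun x => |truncate n (h x)| * Iphi φ t x := fun ht hZt n =>
    .of_nonneg_of_le (fun x => mul_nonneg (abs_nonneg _) (Iphi_nonneg hφ ht x))
      (fun x => mul_le_mul_of_nonneg_right (abs_truncate_le n _) (Iphi_nonneg hφ ht x))
      ((hasSum_Iphi hφ ht hZt).summable.mul_left (n : ℝ))
  have hbound : ∀ n x, |steinSolution φ lam (fun y => truncate n (h y))
      (∑' y, truncate n (h y) * Iphi φ lam y) x| ≤ K := fun n =>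
    hK _ (fun x => (abs_truncate_sub_truncate n _ _).trans (hLip x))
      (htrunc_summable hlam.le hZ n)
      (by filter_upwards [hμ, hZae] with s hs hZs using htrunc_summable hs hZs n)
      _ (steinSolution_spec hlam.ne' _ _) rfl
  refine exists_abs_sub_le_of_tendsto (F := fun n s => ∑' x, truncate n (h x) * Iphi φ s x)
    (e := fun n => ∑' y, truncate n (h y) * Iphi φ lam y) ?_ ?_
  · filter_upwards [hμ, hh] with s hs hhs
    refine tendsto_tsum_of_dominated_convergence hhs
      (fun x => (tendsto_truncate (h x)).mul_const _) (.of_forall fun n x => ?_)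
    rw [norm_mul, Real.norm_eq_abs, Real.norm_of_nonneg (Iphi_nonneg hφ hs x)]
    exact mul_le_mul_of_nonneg_right (abs_truncate_le_abs n _) (Iphi_nonneg hφ hs x)
  · filter_upwards [hμ, hZae] with s hs hZs n
    exact abs_tsum_mul_Iphi_sub_le hφ0 hφ hs hZs (steinSolution_spec hlam.ne' _ _) (hbound n)

lemma IsSteinBound.exists_abs_tsum_mul_Iphi_sub_le_mul (hK : IsSteinBound φ μ lam u K)
    (hφ0 : φ 0 = 0) (hφ : ∀ x : ℕ, 1 ≤ x → 0 < φ x) (hμ : ∀ᵐ s ∂μ, 0 ≤ s)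
    (hZae : ∀ᵐ s ∂μ, Summable fun x : ℕ => s ^ x / phiProd φ x) (hlam : 0 < lam)
    (hZ : Summable fun x : ℕ => lam ^ x / phiProd φ x) {L : ℝ} (hL : 0 ≤ L)
    (hLip : ∀ x, |h (x + 1) - h x| ≤ L * u (x + 1))
    (hh : ∀ᵐ s ∂μ, Summable fun x => |h x| * Iphi φ s x) :
    ∃ c, ∀ᵐ s ∂μ, |∑' x, h x * Iphi φ s x - c| ≤ L * K * |lam - s| := by
  rcases hL.eq_or_lt with rfl | hL
  · have hconst : ∀ x, h x = h 0 := fun x => by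
      induction x with
      | zero => rfl
      | succ x ih => simpa [ih, sub_eq_zero] using hLip x
    refine ⟨h 0, ?_⟩
    filter_upwards [hμ, hZae] with s hs hZs
    simp [hconst _, tsum_mul_left, (hasSum_Iphi hφ hs hZs).tsum_eq]
  · obtain ⟨c, hc⟩ := hK.exists_abs_tsum_mul_Iphi_sub_le hφ0 hφ hμ hZae hlam hZ
      (h := fun x => h x / L)
      (fun x => by
        rw [← sub_div, abs_div, abs_of_pos hL, div_le_iff₀ hL, mul_comm]
        exact hLip x)
      (by
        filter_upwards [hh] with s hs
        refine (hs.div_const L).congr fun x => ?_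
        rw [abs_div, abs_of_pos hL]
        ring)
    refine ⟨L * c, hc.mono fun s hs => ?_⟩
    have hscale : ∑' x, h x * Iphi φ s x = L * ∑' x, h x / L * Iphi φ s x := by
      rw [← tsum_mul_left]
      exact tsum_congr fun x => by field_simp
    rw [hscale, ← mul_sub, abs_mul, abs_of_pos hL, mul_assoc]
    exact mul_le_mul_of_nonneg_left hs hL.le

end SteinBound

section Moments

variable {μ : Measure ℝ}

lemma integral_pos_of_ae_pos {α : Type*} [MeasurableSpace α] {ν : Measure α} [NeZero ν]
    {f : α → ℝ} (hfi : Integrable f ν) (hf : ∀ᵐ a ∂ν, 0 < f a) : 0 < ∫ a, f a ∂ν := by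
  have hf0 : 0 ≤ᵐ[ν] f := hf.mono fun _ ha => ha.le
  refine (integral_nonneg_of_ae hf0).lt_of_ne fun h => ?_
  obtain ⟨a, ha, ha0⟩ := (hf.and ((integral_eq_zero_iff_of_nonneg_ae hf0 hfi).1 h.symm)).exists
  exact ha.ne' ha0

lemma memLp_two_id (hμ2 : Integrable (fun s : ℝ => s ^ 2) μ) : MemLp (fun s : ℝ => s) 2 μ :=
  (memLp_two_iff_integrable_sq measurable_id.aestronglyMeasurable).2 hμ2

lemma integrable_sub_mul_of_abs_sub_le [IsFiniteMeasure μ]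
    (hμ2 : Integrable (fun s : ℝ => s ^ 2) μ) {G : ℝ → ℝ} {a c C : ℝ}
    (hG : AEStronglyMeasurable G μ) (hGc : ∀ᵐ s ∂μ, |G s - c| ≤ C * |a - s|) :
    Integrable (fun s => (a - s) * G s) μ := by
  have h2 : MemLp (fun s => a - s) 2 μ := (memLp_const a).sub (memLp_two_id hμ2)
  refine (((h2.integrable one_le_two).abs.mul_const |c|).add
    (h2.integrable_sq.const_mul C)).mono' (h2.1.mul hG) ?_
  filter_upwards [hGc] with s hs
  have hG_le : |G s| ≤ |c| + C * |a - s| := by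
    linarith [abs_sub_abs_le_abs_sub (G s) c]
  simp only [Pi.add_apply, norm_mul, Real.norm_eq_abs, ← sq_abs (a - s)]
  nlinarith [mul_le_mul_of_nonneg_left hG_le (abs_nonneg (a - s))]

lemma abs_integral_sub_mul_le [IsProbabilityMeasure μ]
    (hμ2 : Integrable (fun s : ℝ => s ^ 2) μ) {G : ℝ → ℝ} {a c C : ℝ}
    (hG : AEStronglyMeasurable G μ) (hGc : ∀ᵐ s ∂μ, |G s - c| ≤ C * |a - s|)
    (ha : a = ∫ s, s ∂μ) :
    |∫ s, (a - s) * G s ∂μ| ≤ C * ∫ s, (s - a) ^ 2 ∂μ := by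
  have hid : Integrable (fun s : ℝ => s) μ := (memLp_two_id hμ2).integrable one_le_two
  have hlin : Integrable (fun s => (a - s) * c) μ := ((integrable_const a).sub hid).mul_const c
  have hcentred : ∫ s, (a - s) * c ∂μ = 0 := by
    rw [integral_mul_const, integral_sub (integrable_const a) hid, integral_const, ← ha]
    simp
  calc |∫ s, (a - s) * G s ∂μ| = |∫ s, (a - s) * (G s - c) ∂μ| := by
        simp_rw [mul_sub]
        rw [integral_sub (integrable_sub_mul_of_abs_sub_le hμ2 hG hGc) hlin, hcentred, sub_zero]
    _ ≤ ∫ s, |(a - s) * (G s - c)| ∂μ := abs_integral_le_integral_abs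
    _ ≤ ∫ s, C * (s - a) ^ 2 ∂μ := by
        refine integral_mono_of_nonneg (.of_forall fun s => abs_nonneg _)
          (((memLp_two_id hμ2).sub (memLp_const a)).integrable_sq.const_mul C) ?_
        filter_upwards [hGc] with s hs
        rw [abs_mul, ← sq_abs (s - a), abs_sub_comm s a]
        nlinarith [mul_le_mul_of_nonneg_left hs (abs_nonneg (a - s))]
    _ = C * ∫ s, (s - a) ^ 2 ∂μ := integral_const_mul C _

end Moments

lemma tsum_mul_integral_Iphi {φ : ℕ → ℝ} (hφ : ∀ x : ℕ, 1 ≤ x → 0 < φ x) {μ : Measure ℝ}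
    [IsFiniteMeasure μ] (hμ : ∀ᵐ s ∂μ, 0 ≤ s)
    (hZae : ∀ᵐ s ∂μ, Summable fun x : ℕ => s ^ x / phiProd φ x) {f : ℕ → ℝ}
    (hf : Summable fun x => |f x| * ∫ s, Iphi φ s x ∂μ) :
    ∑' x, f x * ∫ s, Iphi φ s x ∂μ = ∫ s, ∑' x, f x * Iphi φ s x ∂μ := by
  have hint := integrable_Iphi hφ hμ hZae
  rw [← integral_tsum_of_summable_integral_norm fun x => (hint x).const_mul (f x)]
  · simp_rw [integral_const_mul]
  · refine hf.congr fun x => ?_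
    rw [← integral_const_mul]
    refine integral_congr_ae ?_
    filter_upwards [hμ] with s hs
    rw [norm_mul, Real.norm_eq_abs, Real.norm_of_nonneg (Iphi_nonneg hφ hs x)]

theorem Iphi_mixture_unbiased_general (φ : ℕ → ℝ) (hφ0 : φ 0 = 0)
    (hφ : ∀ x : ℕ, 1 ≤ x → 0 < φ x)
    (μ : Measure ℝ) [IsProbabilityMeasure μ]
    (hμpos : ∀ᵐ s ∂μ, 0 < s)
    (hμ2 : Integrable (fun s : ℝ => s ^ 2) μ)
    (hZae : ∀ᵐ s ∂μ, Summable fun x : ℕ => s ^ x / phiProd φ x)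
    (lam : ℝ) (hlamdef : lam = ∫ s, s ∂μ)
    (hZ : Summable fun x : ℕ => lam ^ x / phiProd φ x)
    (m : ℕ → ℝ) (hm : ∀ x : ℕ, m x = ∫ s, Iphi φ s x ∂μ)
    (u : ℕ → ℝ) (hu : ∀ x : ℕ, 0 < u x)
    (f : ℕ → ℝ)
    (hfm : Summable fun x : ℕ => |f x| * m x)
    (g : ℕ → ℝ)
    (hg : ∀ x : ℕ, lam * g (x + 1) - φ x * g x = f x - ∑' y : ℕ, f y * Iphi φ lam y)
    (hM : BddAbove (Set.range fun x : ℕ => |g (x + 1) - g x| / u x))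
    (hgs : ∀ᵐ s ∂μ, Summable fun x : ℕ => |g (x + 1)| * Iphi φ s x)
    (K : ℝ)
    (hK : ∀ h : ℕ → ℝ, (∀ x : ℕ, |h (x + 1) - h x| ≤ u (x + 1)) →
      (Summable fun x : ℕ => |h x| * Iphi φ lam x) →
      (∀ᵐ s ∂μ, Summable fun x : ℕ => |h x| * Iphi φ s x) →
      ∀ gh : ℕ → ℝ,
        (∀ x : ℕ, lam * gh (x + 1) - φ x * gh x = h x - ∑' y : ℕ, h y * Iphi φ lam y) →
        gh 0 = 0 → ∀ x : ℕ, |gh x| ≤ K) :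
    |(∑' x : ℕ, f x * m x) - ∑' x : ℕ, f x * Iphi φ lam x| ≤
      (⨆ x : ℕ, |g (x + 1) - g x| / u x) * K * ∫ s, (s - lam) ^ 2 ∂μ := by
  have hμ : ∀ᵐ s ∂μ, 0 ≤ s := hμpos.mono fun _ hs => hs.le
  have hlam : 0 < lam :=
    hlamdef ▸ integral_pos_of_ae_pos ((memLp_two_id hμ2).integrable one_le_two) hμpos
  set M := ⨆ x : ℕ, |g (x + 1) - g x| / u x
  have hgLip : ∀ x, |g (x + 1 + 1) - g (x + 1)| ≤ M * u (x + 1) := fun x =>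
    (div_le_iff₀ (hu (x + 1))).1 (le_ciSup hM (x + 1))
  obtain ⟨c, hc⟩ := IsSteinBound.exists_abs_tsum_mul_Iphi_sub_le_mul hK hφ0 hφ hμ hZae hlam hZ
    (Real.iSup_nonneg fun x => div_nonneg (abs_nonneg _) (hu x).le) hgLip hgs
  have hstein : ∀ᵐ s ∂μ, ∑' x, f x * Iphi φ s x =
      ∑' y, f y * Iphi φ lam y + (lam - s) * ∑' x, g (x + 1) * Iphi φ s x := by
    filter_upwards [hμ, hZae, hgs] with s hs hZs hgsum
    have hsum : Summable fun x => g (x + 1) * Iphi φ s x :=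
      .of_abs (hgsum.congr fun x => by rw [abs_mul, abs_of_nonneg (Iphi_nonneg hφ hs x)])
    linarith [Iphi_stein_identity hφ0 hφ hs hZs hg hsum]
  have hG : AEStronglyMeasurable (fun s => ∑' x, g (x + 1) * Iphi φ s x) μ := by fun_prop
  simp only [hm] at hfm ⊢
  rw [tsum_mul_integral_Iphi hφ hμ hZae hfm, integral_congr_ae hstein,
    integral_add (integrable_const _) (integrable_sub_mul_of_abs_sub_le hμ2 hG hc), integral_const]
  simpa using abs_integral_sub_mul_le hμ2 hG hc hlamdef

/-- Unbiased approximation of mixed `I_φ(λ)` distributions: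
`|Σ f dm − Σ f dI_φ(λ)| ≤ M · K · ∫ (s − λ)² dμ` where `λ = ∫ s dμ`,
`M = sup_x |g(x+1) − g(x)|/u(x)` and `K` is a uniform bound on the Stein solutions
(vanishing at `0`) for `d_{u→}`-Lipschitz test functions. -/
theorem Iphi_mixture_unbiased (φ : ℕ → ℝ) (hφ0 : φ 0 = 0)
    (hφ : ∀ x : ℕ, 1 ≤ x → 0 < φ x)
    (μ : Measure ℝ) [IsProbabilityMeasure μ]
    (hμpos : ∀ᵐ s ∂μ, 0 < s)
    (hμ2 : Integrable (fun s : ℝ => s ^ 2) μ)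
    (hZae : ∀ᵐ s ∂μ, Summable fun x : ℕ => s ^ x / phiProd φ x)
    (lam : ℝ) (hlamdef : lam = ∫ s, s ∂μ)
    (hZ : Summable fun x : ℕ => lam ^ x / phiProd φ x)
    (m : ℕ → ℝ) (hm : ∀ x : ℕ, m x = ∫ s, Iphi φ s x ∂μ)
    (u : ℕ → ℝ) (hu : ∀ x : ℕ, 0 < u x)
    (f : ℕ → ℝ)
    (hf : Summable fun x : ℕ => |f x| * Iphi φ lam x)
    (hfm : Summable fun x : ℕ => |f x| * m x)
    (g : ℕ → ℝ)
    (hg : ∀ x : ℕ, lam * g (x + 1) - φ x * g x = f x - ∑' y : ℕ, f y * Iphi φ lam y)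
    (hM : BddAbove (Set.range fun x : ℕ => |g (x + 1) - g x| / u x))
    (hgs : ∀ᵐ s ∂μ, Summable fun x : ℕ => |g (x + 1)| * Iphi φ s x)
    (K : ℝ) (hK0 : 0 ≤ K)
    (hK : ∀ h : ℕ → ℝ, (∀ x : ℕ, |h (x + 1) - h x| ≤ u (x + 1)) →
      (Summable fun x : ℕ => |h x| * Iphi φ lam x) →
      (∀ᵐ s ∂μ, Summable fun x : ℕ => |h x| * Iphi φ s x) →
      ∀ gh : ℕ → ℝ,
        (∀ x : ℕ, lam * gh (x + 1) - φ x * gh x = h x - ∑' y : ℕ, h y * Iphi φ lam y) →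
        gh 0 = 0 → ∀ x : ℕ, |gh x| ≤ K) :
    |(∑' x : ℕ, f x * m x) - ∑' x : ℕ, f x * Iphi φ lam x| ≤
      (⨆ x : ℕ, |g (x + 1) - g x| / u x) * K * ∫ s, (s - lam) ^ 2 ∂μ :=
  Iphi_mixture_unbiased_general φ hφ0 hφ μ hμpos hμ2 hZae lam hlamdef hZ m hm u hu f hfm g hg hM hgs
    K hK
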